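/- Let H = (V,E) be a finite hypergraph with |E| = m, fix an edge d ∈ E, fix r ∈ {1,…,m}, and fix an injective sequence σ = (σ_1,…,σ_{r−1}) of edges (d not among them) such that d is still free after the sequential greedy matching processes σ_1,…,σ_{r−1} in order; let P denote the set of edges incident to d (including d) that are still free at that point. Then for every subset U ⊆ E, the number of bijections π : E → {1,…,m} with π(σ_i) = i for all i < r such that the greedy matching on π removes d from the free set at step r with p(d) ∈ U is exactly |P ∩ U| · (m − r)!. -/

import Mathlib

/-!
Counting lemma:  fix an edge `d`, a step `r ∈ {1,…,m}` and an injective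
sequence `σ = (σ₁,…,σ_{r-1})` of edges not containing `d` such that `d` is
still free after the greedy process handles `σ` in order; let `P` be the set
of edges incident to `d` (including `d`) still free at that point.  Then for
every `U ⊆ E`, the number of priority bijections `π : E ≃ Fin m` (step `i`
corresponds to `π`-value `i - 1`) with `π(σᵢ) = i` for all `i < r` such that
the greedy matching on `π` removes `d` from the free set at step `r` with
`p(d) ∈ U` is exactly `|P ∩ U| ⬝ (m - r)!`.
-/

open Finset

open scoped Classical

variable {V E : Type*}

/-- Two hyperedges are incident if they share a vertex. -/
def Incident [DecidableEq V] (vert : E → Finset V) (e f : E) : Prop :=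
  (vert e ∩ vert f).Nonempty

/-- `Matched vert π e` holds iff the sequential greedy matching (processing the
edges in increasing `π`-order, selecting an edge iff it is still free when
processed) selects `e`. -/
def Matched [DecidableEq V] (vert : E → Finset V) (π : E → ℕ) (e : E) : Prop :=
  ∀ f, π f < π e → Incident vert f e → ¬ Matched vert π f
termination_by π e

/-- The matched edge owning `e` (the `π`-least matched edge incident to `e`),
i.e. the matched edge `p(e)` whose sample space `e` belongs to;  `e` is removed
from the free set at the step at which `p(e)` is processed. -/
noncomputable def owner [DecidableEq V] (vert : E → Finset V) (π : E → ℕ) (e : E) : E :=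
  if h : ∃ f, (Matched vert π f ∧ Incident vert f e) ∧
      ∀ f', Matched vert π f' → Incident vert f' e → π f ≤ π f' then
    h.choose
  else e

/-- One step of the greedy process on the free set `F`:  process edge `e`;
if `e` is free it is selected and all free edges incident to it (including `e`
itself) are removed from the free set. -/
noncomputable def stepFree [DecidableEq V] [DecidableEq E]
    (vert : E → Finset V) (F : Finset E) (e : E) : Finset E :=
  if e ∈ F then F.filter fun f => ¬ Incident vert e f else F

/-- The set of free edges after the greedy process handles the edges of the
list `L` in order (starting from all edges free). -/
noncomputable def freeAfter [DecidableEq V] [DecidableEq E] [Fintype E]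
    (vert : E → Finset V) (L : List E) : Finset E :=
  L.foldl (stepFree vert) Finset.univ

/-!
Once `π` processes `σ` first, the free set after `σ` depends on `σ` alone, and an edge processed
right after `σ` is matched iff it is still free. So `d`, still free after `σ`, is removed at step `r`
exactly when the edge `e` of `π`-value `r - 1` lies in `P`, and then `p(d) = e`. Sorting the
bijections by `e`, each `e ∈ P ∩ U` accounts for the bijections processing `σ` and then `e` first,
and there are `(m - r)!` of those.
-/

open scoped Nat

def ProcessesFirst (π : E → ℕ) (L : List E) : Prop :=
  ∀ i : Fin L.length, π (L.get i) = i

lemma processesFirst_append_singleton_iff {π : E → ℕ} {L : List E} {a : E} :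
    ProcessesFirst π (L ++ [a]) ↔ ProcessesFirst π L ∧ π a = L.length := by
  constructor
  · intro h
    refine ⟨fun i => ?_, ?_⟩
    · simpa [List.getElem_append_left] using h ⟨i, by simp⟩
    · simpa using h ⟨L.length, by simp⟩
  · rintro ⟨hL, ha⟩ ⟨i, hi⟩
    rw [List.length_append, List.length_singleton] at hi
    rcases Nat.lt_succ_iff_lt_or_eq.mp hi with h | rfl
    · simpa [List.getElem_append_left h] using hL ⟨i, h⟩
    · simpa using ha

section Greedy

variable [DecidableEq V] (vert : E → Finset V)

lemma incident_self {e : E} (he : (vert e).Nonempty) : Incident vert e e := by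
  simpa [Incident] using he

lemma exists_matched_incident {d : E} (hd : (vert d).Nonempty) (π : E → ℕ) :
    ∃ f, Matched vert π f ∧ Incident vert f d := by
  by_contra! h
  refine h d ?_ (incident_self vert hd)
  rw [Matched]
  exact fun f _ hinc hf => h f hf hinc

section Owner

variable [Fintype E]

lemma owner_spec {d : E} (hd : (vert d).Nonempty) (π : E → ℕ) :
    (Matched vert π (owner vert π d) ∧ Incident vert (owner vert π d) d) ∧
      ∀ f, Matched vert π f → Incident vert f d → π (owner vert π d) ≤ π f := by
  have hmin : ∃ f, (Matched vert π f ∧ Incident vert f d) ∧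
      ∀ f', Matched vert π f' → Incident vert f' d → π f ≤ π f' := by
    obtain ⟨f₀, hf₀⟩ := exists_matched_incident vert hd π
    obtain ⟨f, hf, hle⟩ :=
      (univ.filter fun f => Matched vert π f ∧ Incident vert f d).exists_min_image π
        ⟨f₀, by simpa using hf₀⟩
    exact ⟨f, by simpa using hf, fun f' h₁ h₂ => hle f' (by simp [h₁, h₂])⟩
  rw [owner, dif_pos hmin]
  exact hmin.choose_spec

end Owner

section Free

variable [DecidableEq E]

lemma mem_stepFree {F : Finset E} {a e : E} :
    e ∈ stepFree vert F a ↔ e ∈ F ∧ (a ∈ F → ¬ Incident vert a e) := by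
  unfold stepFree
  split_ifs with ha <;> simp [ha]

lemma foldl_stepFree_subset (L : List E) (F : Finset E) : L.foldl (stepFree vert) F ⊆ F := by
  induction L generalizing F with
  | nil => exact Subset.rfl
  | cons a L ih => exact (ih _).trans fun e he => ((mem_stepFree vert).mp he).1

lemma notMem_foldl_stepFree {x : E} (hx : (vert x).Nonempty) {L : List E} (hxL : x ∈ L)
    (F : Finset E) : x ∉ L.foldl (stepFree vert) F := by
  induction L generalizing F with
  | nil => simp at hxL
  | cons a L ih =>
    rcases List.mem_cons.mp hxL with rfl | hxL
    · intro hmem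
      have := (mem_stepFree vert).mp (foldl_stepFree_subset vert L _ hmem)
      exact this.2 this.1 (incident_self vert hx)
    · exact ih hxL _

variable [Fintype E]

theorem mem_freeAfter_iff {π : E → ℕ} (hπ : Function.Injective π) {L : List E}
    (hL : ProcessesFirst π L) (e : E) :
    e ∈ freeAfter vert L ↔ ∀ f, π f < L.length → Incident vert f e → ¬ Matched vert π f := by
  induction L using List.reverseRecOn generalizing e with
  | nil => simp [freeAfter]
  | append_singleton L a ih =>
    obtain ⟨hL, ha⟩ := processesFirst_append_singleton_iff.mp hL
    have hMa : Matched vert π a ↔ a ∈ freeAfter vert L := by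
      rw [Matched, ih hL a, ha]
    have hsplit : ∀ Q : E → Prop,
        (∀ f, π f < L.length + 1 → Q f) ↔ (∀ f, π f < L.length → Q f) ∧ Q a := by
      refine fun Q => ⟨fun h => ⟨fun f hf => h f (by omega), h a (by omega)⟩, ?_⟩
      rintro ⟨h, hQa⟩ f hf
      rcases Nat.lt_succ_iff_lt_or_eq.mp hf with hf | hf
      · exact h f hf
      · exact hπ (hf.trans ha.symm) ▸ hQa
    rw [freeAfter, List.foldl_append, List.foldl_cons, List.foldl_nil, ← freeAfter, mem_stepFree,
      ih hL, ← hMa, List.length_append, List.length_singleton, hsplit]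
    simp only [imp_not_comm]

theorem matched_iff_mem_freeAfter {π : E → ℕ} (hπ : Function.Injective π) {L : List E}
    (hL : ProcessesFirst π L) {a : E} (ha : π a = L.length) :
    Matched vert π a ↔ a ∈ freeAfter vert L := by
  rw [Matched, mem_freeAfter_iff vert hπ hL, ha]

theorem owner_eq_iff {π : E → ℕ} (hπ : Function.Injective π) {L : List E}
    (hL : ProcessesFirst π L) {d e : E} (hne : (vert d).Nonempty) (hd : d ∈ freeAfter vert L)
    (he : π e = L.length) :
    owner vert π d = e ↔ e ∈ freeAfter vert L ∧ Incident vert e d := by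
  obtain ⟨⟨hMo, hIo⟩, hmin⟩ := owner_spec vert hne π
  constructor
  · rintro rfl
    exact ⟨(matched_iff_mem_freeAfter vert hπ hL he).mp hMo, hIo⟩
  · rintro ⟨heF, heI⟩
    have hMe := (matched_iff_mem_freeAfter vert hπ hL he).mpr heF
    refine hπ (le_antisymm (hmin e hMe heI) ?_)
    by_contra! hlt
    exact (mem_freeAfter_iff vert hπ hL d).mp hd _ (he ▸ hlt) hIo hMo

end Free

end Greedy

lemma card_equiv_extending {α β : Type*} [Fintype α] [Fintype β] {s : Set α} {t : Set β}
    [Fintype s] (e₀ : s ≃ t) (h : Fintype.card α = Fintype.card β) :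
    Fintype.card {π : α ≃ β // ∀ x : s, π x = e₀ x} = (Fintype.card α - Fintype.card s)! := by
  have hs : Fintype.card (sᶜ : Set α) = Fintype.card α - Fintype.card s :=
    Fintype.card_compl_set s
  have hst : Fintype.card (sᶜ : Set α) = Fintype.card (tᶜ : Set β) := by
    rw [hs, Fintype.card_compl_set, h, Fintype.card_congr e₀]
  rw [Fintype.card_congr (Equiv.Set.compl e₀),
    Fintype.card_equiv (Fintype.equivOfCardEq hst), hs]

lemma card_processesFirst [DecidableEq E] [Fintype E] {m : ℕ} (hm : Fintype.card E = m)
    {L : List E} (hnd : L.Nodup) (hlen : L.length ≤ m) :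
    #{π : E ≃ Fin m | ProcessesFirst (fun e => (π e : ℕ)) L} = (m - L.length)! := by
  let e₀ : {x | x ∈ L} ≃ Set.range (Fin.castLE hlen) :=
    (List.Nodup.getEquiv L hnd).symm.trans (Equiv.ofInjective _ (Fin.castLE_injective hlen))
  have hcard : Fintype.card {x | x ∈ L} = L.length := by
    convert (Fintype.card_congr (List.Nodup.getEquiv L hnd).symm).trans (Fintype.card_fin _)
    exact Iff.rfl
  subst hm
  rw [← hcard, ← card_equiv_extending e₀ (by simp), Fintype.card_subtype]
  congr 1
  refine filter_congr fun π _ => ?_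
  refine Iff.trans ?_ (List.Nodup.getEquiv L hnd).symm.forall_congr_left.symm
  refine forall_congr' fun i => ?_
  simp [e₀, Fin.ext_iff]

lemma card_processesFirst_then_mem [DecidableEq E] [Fintype E] {m : ℕ}
    (hm : Fintype.card E = m) {L : List E} (hnd : L.Nodup) (hlen : L.length < m) {T : Finset E}
    (hT : ∀ e ∈ T, e ∉ L) :
    #{π : E ≃ Fin m |
        ProcessesFirst (fun e => (π e : ℕ)) L ∧ π.symm ⟨L.length, hlen⟩ ∈ T} =
      #T * (m - (L.length + 1))! := by
  rw [card_eq_sum_card_fiberwise (f := fun π => π.symm ⟨L.length, hlen⟩) (t := T)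
    fun π hπ => (mem_filter.mp hπ).2.2]
  refine sum_const_nat fun e he => ?_
  have hLe : (L ++ [e]).length = L.length + 1 := by simp
  rw [filter_filter, ← hLe,
    ← card_processesFirst hm (by simpa using hnd.concat (hT e he)) (by omega)]
  refine congrArg card (filter_congr fun π _ => ?_)
  have hπe : π.symm ⟨L.length, hlen⟩ = e ↔ (π e : ℕ) = L.length := by
    rw [Equiv.symm_apply_eq, eq_comm, Fin.ext_iff]
  rw [processesFirst_append_singleton_iff, hπe]
  constructor
  · rintro ⟨⟨hL, -⟩, he'⟩
    exact ⟨hL, he'⟩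
  · rintro ⟨hL, he'⟩
    exact ⟨⟨hL, hπe.mpr he' ▸ he⟩, he'⟩

theorem stmt4_general [DecidableEq V] [Fintype E] [DecidableEq E] {m r : ℕ}
    (vert : E → Finset V) (hne : ∀ e : E, (vert e).Nonempty)
    (hm : Fintype.card E = m) (d : E)
    (hr1 : 1 ≤ r) (hrm : r ≤ m)
    (σ : List E) (hσlen : σ.length = r - 1) (hσinj : σ.Nodup)
    (hfree : d ∈ freeAfter vert σ) (U : Finset E) :
    -- `P`: the edges incident to `d` (including `d`) still free after `σ`
    let P : Finset E := (freeAfter vert σ).filter fun f => Incident vert f d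
    (Finset.univ.filter fun π : E ≃ Fin m =>
        (∀ i : Fin σ.length, ((π (σ.get i)) : ℕ) = (i : ℕ)) ∧
        ((π (owner vert (fun e => (π e : ℕ)) d)) : ℕ) = r - 1 ∧
        owner vert (fun e => (π e : ℕ)) d ∈ U).card
      = (P ∩ U).card * (m - r).factorial := by
  intro P
  have hlen : σ.length < m := by omega
  have hPσ : ∀ e ∈ P ∩ U, e ∉ σ := fun e he heσ =>
    notMem_foldl_stepFree vert (hne e) heσ univ (mem_filter.mp (mem_inter.mp he).1).1
  rw [show r = σ.length + 1 by omega, ← card_processesFirst_then_mem hm hσinj hlen hPσ]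
  congr 2
  ext π
  refine and_congr_right fun hσπ => ?_
  have hπ : Function.Injective fun e => (π e : ℕ) := Fin.val_injective.comp π.injective
  set e := π.symm ⟨σ.length, hlen⟩
  have he : (π e : ℕ) = σ.length := by simp [e]
  rw [mem_inter, mem_filter, ← owner_eq_iff vert hπ hσπ (hne d) hfree he, Nat.add_sub_cancel,
    ← he, Fin.val_inj, π.injective.eq_iff]
  exact and_congr_right fun h => by rw [h]

theorem stmt4 [DecidableEq V] [Fintype E] [DecidableEq E] {m r : ℕ}
    (vert : E → Finset V) (hne : ∀ e : E, (vert e).Nonempty)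
    (hm : Fintype.card E = m) (d : E)
    (hr1 : 1 ≤ r) (hrm : r ≤ m)
    (σ : List E) (hσlen : σ.length = r - 1) (hσinj : σ.Nodup) (hdσ : d ∉ σ)
    (hfree : d ∈ freeAfter vert σ) (U : Finset E) :
    -- `P`: the edges incident to `d` (including `d`) still free after `σ`
    let P : Finset E := (freeAfter vert σ).filter fun f => Incident vert f d
    (Finset.univ.filter fun π : E ≃ Fin m =>
        (∀ i : Fin σ.length, ((π (σ.get i)) : ℕ) = (i : ℕ)) ∧
        ((π (owner vert (fun e => (π e : ℕ)) d)) : ℕ) = r - 1 ∧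
        owner vert (fun e => (π e : ℕ)) d ∈ U).card
      = (P ∩ U).card * (m - r).factorial :=
  stmt4_general vert hne hm d hr1 hrm σ hσlen hσinj hfree U
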